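/- The connection ρ on the instanton bundle, ρ(T_ν) = Σ_μ b_μ* L_{μ,ν}, is invariant under the action of the braided Lie algebra so_θ(5) spanned by the equivariant derivations L_{μ,ν}: for every L_{μ,ν} and every X ∈ Der(O(S^4_θ)) one has [L_{μ,ν}, ρ(X)] − ρ([L^π_{μ,ν}, X]) = 0 (i.e. δ_{L_{μ,ν}} ρ = 0). -/

import Mathlib

/-!
STATEMENT 8: the connection `ρ` on the instanton bundle,
`ρ(T_ν) = Σ_μ b_μ* L_{μ,ν}`, is invariant under the action of the braided Lie
algebra `so_θ(5)` spanned by the equivariant derivations `L_{μ,ν}`: for every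
`L_{μ,ν}` and every `X ∈ Der(O(S^4_θ))` one has
`[L_{μ,ν}, ρ(X)] − ρ([L^π_{μ,ν}, X]) = 0` (i.e. `δ_{L_{μ,ν}} ρ = 0`).

`O(S^7_θ)` is modelled as a graded `ℂ`-algebra `A` with coinvariant subalgebra
`B := Algebra.adjoin ℂ (b '' V) = O(S^4_θ)`; the equivariant braided
derivations `L_{μ,ν} = −λ^{2μ∧ν} L_{ν,μ}` satisfy the `so_θ(5)` relations,
preserve `B` and restrict to `L^π_{μ,ν}` (the data `Lr` below) with
`L^π_{μ,ν}(b_σ) = b_μ δ_{ν*σ} − λ^{2μ∧ν} b_ν δ_{μ*σ}`.  `Der(O(S^4_θ))` is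
generated over `O(S^4_θ)` by the braided derivations `T_ν` of `B` with
`T_ν(b_σ) = δ_{νσ*} − b_ν ∙ b_σ`; the connection is the (left and right)
`O(S^4_θ)`-linear map `ρ` with `ρ(T_ν) = Σ_μ b_μ* L_{μ,ν}`.  By the
`O(S^4_θ)`-linearity of `ρ` it suffices to state the invariance on the
generators `X = T_σ`; the brackets are braided commutators (with braiding
factor `λ^{2(μ+ν)∧σ}`).
-/

noncomputable section

open scoped BigOperators

namespace Statement8

/-- the five weights `{(0,0),(±1,0),(0,±1)}` -/
def V : Finset (ℤ × ℤ) := {(0,0), (1,0), (-1,0), (0,1), (0,-1)}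

/-- `μ∧ν := μ₁ν₂ − μ₂ν₁` -/
def wedge (p r : ℤ × ℤ) : ℤ := p.1 * r.2 - p.2 * r.1

/-- `λ^{2 μ∧ν}` with `λ = e^{−πiθ}` -/
def q (θ : ℝ) (p r : ℤ × ℤ) : ℂ :=
  Complex.exp (-((Real.pi : ℂ) * Complex.I) * (θ : ℂ) * ((2 * wedge p r : ℤ) : ℂ))

/-- the doubled weight `2μ` (the generators `z_r` of `O(S^7_θ)` have
half-integral weights, so the grading uses doubled weights) -/
def dbl (p : ℤ × ℤ) : ℤ × ℤ := (2 * p.1, 2 * p.2)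

/-- the braiding factor between homogeneous elements of (doubled) weights
`m`, `m'`; on the subalgebra `O(S^4_θ)`, `Q7 θ (dbl μ) (dbl ν) = λ^{2μ∧ν}`. -/
def Q7 (θ : ℝ) (m m' : ℤ × ℤ) : ℂ :=
  Complex.exp (-((Real.pi : ℂ) * Complex.I) * (θ : ℂ) * (((wedge m m' : ℤ) : ℂ) / 2))

/-!
Both brackets are computed on generators. On `O(S^4_θ)` the braided commutator
`[L^π_{μ,ν}, T_σ]` and `δ_{σ,-ν} T_μ − λ^{2μ∧ν} δ_{σ,-μ} T_ν` are braided derivations of the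
same weight `μ + ν + σ`, and on a generator `b_τ` their difference reduces to an identity
between Kronecker deltas and braiding factors; a braided derivation vanishing on generators
vanishes. So the `T_σ` transform in the vector representation of `so_θ(5)`.
On `O(S^7_θ)`, `ρ(T_σ) = Σ_τ b_{-τ} L_{τ,σ}` contracts the dual vector `b_{-τ}` against the
first index of `L_{τ,σ}`. Expanding `[L_{μ,ν}, b_{-τ} L_{τ,σ}]` by the Leibniz rule and the
`so_θ(5)` relations, the terms carrying that index cancel in the sum over `τ`, so `ρ(T_σ)`
also transforms as a vector in `σ`, and `ρ` intertwines the two actions.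
-/

section BraidedDerivation

variable {ι R A : Type*} [CommRing R] [Ring A] [Algebra R A]

structure IsSkewBicharacter [Add ι] (χ : ι → ι → R) : Prop where
  map_add_left : ∀ a b c, χ (a + b) c = χ a c * χ b c
  map_add_right : ∀ a b c, χ a (b + c) = χ a b * χ a c
  mul_swap : ∀ a b, χ a b * χ b a = 1

lemma IsSkewBicharacter.map_zero_right [AddZeroClass ι] {χ : ι → ι → R}
    (hχ : IsSkewBicharacter χ) (a : ι) : χ a 0 = 1 := by
  have hidem : χ a 0 = χ a 0 * χ a 0 := by rw [← hχ.map_add_right, add_zero]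
  calc χ a 0 = χ a 0 * (χ a 0 * χ 0 a) := by rw [hχ.mul_swap, mul_one]
    _ = 1 := by rw [← mul_assoc, ← hidem, hχ.mul_swap]

def IsBraidedDerivation (χ : ι → ι → R) (𝒜 : ι → Submodule R A) (w : ι)
    (D : Module.End R A) : Prop :=
  ∀ m x y, x ∈ 𝒜 m → D (x * y) = D x * y + χ w m • (x * D y)

namespace IsBraidedDerivation

variable {χ : ι → ι → R} {𝒜 : ι → Submodule R A} {w : ι} {D : Module.End R A}

lemma map_one [AddZeroClass ι] (hχ : IsSkewBicharacter χ) (hD : IsBraidedDerivation χ 𝒜 w D)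
    (h1 : (1 : A) ∈ 𝒜 0) : D 1 = 0 := by
  simpa [hχ.map_zero_right] using hD 0 1 1 h1

lemma ite_smul {P : Prop} [Decidable P] (hD : P → IsBraidedDerivation χ 𝒜 w D) :
    IsBraidedDerivation χ 𝒜 w ((if P then (1 : R) else 0) • D) := by
  split_ifs with hP
  · simpa using hD hP
  · intro m x y _
    simp

lemma sub {D' : Module.End R A} (hD : IsBraidedDerivation χ 𝒜 w D)
    (hD' : IsBraidedDerivation χ 𝒜 w D') : IsBraidedDerivation χ 𝒜 w (D - D') := by
  intro m x y hx
  simp only [LinearMap.sub_apply, hD m x y hx, hD' m x y hx, sub_mul, mul_sub, smul_sub]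
  abel

lemma smul (c : R) (hD : IsBraidedDerivation χ 𝒜 w D) : IsBraidedDerivation χ 𝒜 w (c • D) := by
  intro m x y hx
  simp only [LinearMap.smul_apply, hD m x y hx, smul_add, smul_mul_assoc, mul_smul_comm,
    smul_comm c (χ w m)]

lemma comp_mulLeft (hD : IsBraidedDerivation χ 𝒜 w D) {m : ι} {x : A} (hx : x ∈ 𝒜 m)
    (X : Module.End R A) (c : R) :
    D ∘ₗ (LinearMap.mulLeft R x ∘ₗ X) - (χ w m * c) • ((LinearMap.mulLeft R x ∘ₗ X) ∘ₗ D)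
      = LinearMap.mulLeft R (D x) ∘ₗ X
        + χ w m • (LinearMap.mulLeft R x ∘ₗ (D ∘ₗ X - c • (X ∘ₗ D))) := by
  ext y
  simp only [LinearMap.sub_apply, LinearMap.add_apply, LinearMap.smul_apply, LinearMap.comp_apply,
    LinearMap.mulLeft_apply, hD m x _ hx, map_sub, map_smul, smul_sub, smul_smul]
  abel

lemma bracket_mul [Add ι] {w₁ w₂ : ι} {D₁ D₂ : Module.End R A} (hχ : IsSkewBicharacter χ)
    (h₁ : IsBraidedDerivation χ 𝒜 w₁ D₁) (h₂ : IsBraidedDerivation χ 𝒜 w₂ D₂)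
    {m : ι} {x : A} (hx : x ∈ 𝒜 m) (h₁x : D₁ x ∈ 𝒜 (m + w₁)) (h₂x : D₂ x ∈ 𝒜 (m + w₂)) (y : A) :
    (D₁ ∘ₗ D₂ - χ w₁ w₂ • (D₂ ∘ₗ D₁)) (x * y)
      = (D₁ ∘ₗ D₂ - χ w₁ w₂ • (D₂ ∘ₗ D₁)) x * y
        + χ (w₁ + w₂) m • (x * (D₁ ∘ₗ D₂ - χ w₁ w₂ • (D₂ ∘ₗ D₁)) y) := by
  have h₁₂ : χ w₁ w₂ * χ w₂ (m + w₁) = χ w₂ m := by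
    rw [hχ.map_add_right, mul_left_comm, hχ.mul_swap, mul_one]
  simp only [LinearMap.sub_apply, LinearMap.smul_apply, LinearMap.comp_apply, h₂ m x y hx,
    h₁ m x y hx, map_add, map_smul, h₁ _ _ _ h₂x, h₂ _ _ _ h₁x, h₁ m x _ hx, h₂ m x _ hx,
    hχ.map_add_left, hχ.map_add_right w₁ m w₂, smul_add, smul_smul, h₁₂, sub_mul, mul_sub,
    smul_mul_assoc, mul_smul_comm]
  module

end IsBraidedDerivation

lemma Module.End.eq_zero_of_twisted_leibniz {s : Set A} (hs : Algebra.adjoin R s = ⊤)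
    {D : Module.End R A} (hD : ∀ a ∈ s, ∃ c : R, ∀ y, D (a * y) = D a * y + c • (a * D y))
    (h1 : D 1 = 0) (hgen : ∀ a ∈ s, D a = 0) : D = 0 := by
  have hmon : Submonoid.closure s ≤ (LinearMap.ker D : Set A) := by
    intro x hx
    induction hx using Submonoid.closure_induction_left with
    | one => exact h1
    | mul_left a ha y _ hy =>
      obtain ⟨c, hc⟩ := hD a ha
      simp [hc, hgen a ha, show D y = 0 from hy]
  have hspan := Submodule.span_le.mpr hmon
  rw [← Algebra.adjoin_eq_span, hs, Algebra.top_toSubmodule, top_le_iff] at hspan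
  exact LinearMap.ker_eq_top.mp hspan

def restrictGrading (𝒜 : ι → Submodule R A) (B : Subalgebra R A) (m : ι) : Submodule R B :=
  (𝒜 m).comap B.val.toLinearMap

end BraidedDerivation

lemma neg_mem_V {τ : ℤ × ℤ} (h : τ ∈ V) : -τ ∈ V := by
  fin_cases h <;> decide

lemma dbl_add (p r : ℤ × ℤ) : dbl (p + r) = dbl p + dbl r := by
  simp only [dbl, Prod.fst_add, Prod.snd_add, Prod.mk_add_mk, mul_add]

lemma dbl_neg (p : ℤ × ℤ) : dbl (-p) = -dbl p := by
  simp only [dbl, Prod.fst_neg, Prod.snd_neg, Prod.neg_mk, mul_neg]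

lemma isSkewBicharacter_Q7 (θ : ℝ) : IsSkewBicharacter (Q7 θ) where
  map_add_left a b c := by
    simp only [Q7, ← Complex.exp_add, wedge, Prod.fst_add, Prod.snd_add]; push_cast; ring_nf
  map_add_right a b c := by
    simp only [Q7, ← Complex.exp_add, wedge, Prod.fst_add, Prod.snd_add]; push_cast; ring_nf
  mul_swap a b := by
    rw [Q7, Q7, ← Complex.exp_add, ← Complex.exp_zero]; simp only [wedge]; push_cast; ring_nf

lemma Q7_dbl_dbl (θ : ℝ) (p r : ℤ × ℤ) : Q7 θ (dbl p) (dbl r) = q θ p r := by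
  simp only [Q7, q, wedge, dbl]; push_cast; ring_nf

lemma Q7_dbl_add_dbl (θ : ℝ) (μ ν σ : ℤ × ℤ) : Q7 θ (dbl μ + dbl ν) (dbl σ) = q θ (μ + ν) σ := by
  rw [← dbl_add, Q7_dbl_dbl]

lemma q_eq_q {θ : ℝ} {p r p' r' : ℤ × ℤ} (h : wedge p r = wedge p' r') :
    q θ p r = q θ p' r' := by
  rw [q, q, h]

lemma q_mul_q_eq_one {θ : ℝ} {p r p' r' : ℤ × ℤ} (h : wedge p r + wedge p' r' = 0) :
    q θ p r * q θ p' r' = 1 := by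
  have hc : (wedge p r : ℂ) + wedge p' r' = 0 := by exact_mod_cast h
  rw [q, q, ← Complex.exp_add, ← Complex.exp_zero]
  congr 1
  push_cast
  linear_combination (-2 * (Real.pi : ℂ) * Complex.I * θ) * hc

lemma q_mul_q_mul_q_eq_one {θ : ℝ} {p r p' r' p'' r'' : ℤ × ℤ}
    (h : wedge p r + wedge p' r' + wedge p'' r'' = 0) :
    q θ p r * q θ p' r' * q θ p'' r'' = 1 := by
  have hc : (wedge p r : ℂ) + wedge p' r' + wedge p'' r'' = 0 := by exact_mod_cast h
  rw [q, q, q, ← Complex.exp_add, ← Complex.exp_add, ← Complex.exp_zero]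
  congr 1
  push_cast
  linear_combination (-2 * (Real.pi : ℂ) * Complex.I * θ) * hc

section VectorRepresentation

variable {M N : Type*} [AddCommGroup M] [Module ℂ M] [AddCommGroup N] [Module ℂ N]

/-- `L_{μ,ν} ⊳ e_σ` in the vector representation of `so_θ(5)`, evaluated along `e_μ ↦ x`,
`e_ν ↦ y`. -/
def so5Act (θ : ℝ) (μ ν σ : ℤ × ℤ) (x y : M) : M :=
  (if σ = -ν then (1:ℂ) else 0) • x - q θ μ ν • ((if σ = -μ then (1:ℂ) else 0) • y)

variable {θ : ℝ} {μ ν σ : ℤ × ℤ}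

lemma map_so5Act (f : M →ₗ[ℂ] N) (x y : M) :
    f (so5Act θ μ ν σ x y) = so5Act θ μ ν σ (f x) (f y) := by
  simp only [so5Act, map_sub, map_smul]

lemma so5Act_sub (x x' y y' : M) :
    so5Act θ μ ν σ (x - x') (y - y') = so5Act θ μ ν σ x y - so5Act θ μ ν σ x' y' := by
  simp only [so5Act]; module

lemma smul_so5Act (c : ℂ) (x y : M) :
    c • so5Act θ μ ν σ x y = so5Act θ μ ν σ (c • x) (c • y) := by
  simp only [so5Act]; module

lemma neg_so5Act (x y : M) : -so5Act θ μ ν σ x y = so5Act θ μ ν σ (-x) (-y) := by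
  simp only [so5Act]; module

lemma sum_so5Act {κ : Type*} (s : Finset κ) (x y : κ → M) :
    ∑ i ∈ s, so5Act θ μ ν σ (x i) (y i) = so5Act θ μ ν σ (∑ i ∈ s, x i) (∑ i ∈ s, y i) := by
  simp only [so5Act, Finset.sum_sub_distrib, Finset.smul_sum]

lemma so5Act_congr {x x' y y' : M} (hx : σ = -ν → x = x') (hy : σ = -μ → y = y') :
    so5Act θ μ ν σ x y = so5Act θ μ ν σ x' y' := by
  unfold so5Act
  split_ifs with h₁ h₂ h₂
  · rw [hx h₁, hy h₂]
  · simp [hx h₁]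
  · simp [hy h₂]
  · simp

lemma so5Act_mem {𝒜 : ℤ × ℤ → Submodule ℂ M} {x y : M} (hx : x ∈ 𝒜 (dbl μ))
    (hy : y ∈ 𝒜 (dbl ν)) : so5Act θ μ ν σ x y ∈ 𝒜 (dbl σ + (dbl μ + dbl ν)) := by
  unfold so5Act
  refine sub_mem ?_ (Submodule.smul_mem _ _ ?_) <;> split_ifs with h
  · subst h; simpa [dbl_neg] using hx
  · simp
  · subst h; simpa [dbl_neg] using hy
  · simp

lemma sum_so5Act_eval {f g : ℤ × ℤ → M} (hμ : μ ∈ V) (hν : ν ∈ V) :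
    ∑ τ ∈ V, so5Act θ μ ν τ (f τ) (g τ) = f (-ν) - q θ μ ν • g (-μ) := by
  simp [so5Act, ite_smul, Finset.sum_sub_distrib, neg_mem_V hμ, neg_mem_V hν]

lemma sum_so5Act_neg_eval {f g : ℤ × ℤ → M} (hμ : μ ∈ V) (hν : ν ∈ V) :
    ∑ τ ∈ V, so5Act θ μ ν (-τ) (f τ) (g τ) = f ν - q θ μ ν • g μ := by
  simp [so5Act, ite_smul, Finset.sum_sub_distrib, hμ, hν]

end VectorRepresentation

lemma IsBraidedDerivation.so5Act {B : Type*} [Ring B] [Algebra ℂ B]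
    {𝒜 : ℤ × ℤ → Submodule ℂ B} {θ : ℝ} {μ ν σ : ℤ × ℤ} {X Y : Module.End ℂ B}
    (hX : IsBraidedDerivation (Q7 θ) 𝒜 (dbl μ) X) (hY : IsBraidedDerivation (Q7 θ) 𝒜 (dbl ν) Y) :
    IsBraidedDerivation (Q7 θ) 𝒜 (dbl μ + dbl ν + dbl σ) (so5Act θ μ ν σ X Y) := by
  refine (IsBraidedDerivation.ite_smul fun h => ?_).sub
    ((IsBraidedDerivation.ite_smul fun h => ?_).smul _)
  · rwa [h, dbl_neg, add_neg_cancel_right]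
  · rwa [h, dbl_neg, add_comm (dbl μ), add_neg_cancel_right]

lemma so5Act_ite (θ : ℝ) (μ ν σ τ : ℤ × ℤ) :
    -q θ (μ + ν) σ * so5Act θ μ ν τ (if μ = -σ then (1:ℂ) else 0) (if ν = -σ then 1 else 0)
      = so5Act θ μ ν σ (if τ = -μ then (1:ℂ) else 0) (if τ = -ν then 1 else 0) := by
  have hσ (x : ℤ × ℤ) : x = -σ ↔ σ = -x := eq_comm.trans neg_eq_iff_eq_neg
  have hσμ : (if σ = -μ then (1:ℂ) else 0) * (q θ (μ + ν) σ - q θ μ ν) = 0 := by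
    split_ifs with h
    · rw [h, q_eq_q (p' := μ) (r' := ν), sub_self, mul_zero]
      simp only [wedge, Prod.fst_add, Prod.snd_add, Prod.fst_neg, Prod.snd_neg]; ring
    · rw [zero_mul]
  have hσν : (if σ = -ν then (1:ℂ) else 0) * (q θ (μ + ν) σ * q θ μ ν - 1) = 0 := by
    split_ifs with h
    · rw [h, q_mul_q_eq_one, sub_self, mul_zero]
      simp only [wedge, Prod.fst_add, Prod.snd_add, Prod.fst_neg, Prod.snd_neg]; ring
    · rw [zero_mul]
  simp only [so5Act, smul_eq_mul, hσ μ, hσ ν]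
  linear_combination (-(if τ = -ν then (1:ℂ) else 0)) * hσμ + (if τ = -μ then (1:ℂ) else 0) * hσν

lemma so5Act_ite_smul {M : Type*} [AddCommGroup M] [Module ℂ M] (θ : ℝ) (μ ν σ τ : ℤ × ℤ)
    (e : M) :
    -q θ (μ + ν) σ • so5Act θ μ ν τ (if μ = -σ then e else 0) (if ν = -σ then e else 0)
      = so5Act θ μ ν σ (if τ = -μ then e else 0) (if τ = -ν then e else 0) := by
  have hite (P : Prop) [Decidable P] :
      (if P then e else 0) = LinearMap.toSpanSingleton ℂ M e (if P then 1 else 0) := by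
    split_ifs <;> simp
  rw [hite, hite, hite, hite, ← map_so5Act, ← map_so5Act, ← map_smul, smul_eq_mul, so5Act_ite]

section FourSphere

variable {θ : ℝ} {A : Type*} [Ring A] [Algebra ℂ A] {𝒜 : ℤ × ℤ → Submodule ℂ A}
  {b : ℤ × ℤ → A}

def genS4 (b : ℤ × ℤ → A) {τ : ℤ × ℤ} (hτ : τ ∈ V) : Algebra.adjoin ℂ (b '' V) :=
  ⟨b τ, Algebra.subset_adjoin (Set.mem_image_of_mem b hτ)⟩

lemma coe_so5Act {B : Subalgebra ℂ A} (μ ν σ : ℤ × ℤ) (x y : B) :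
    ((so5Act θ μ ν σ x y : B) : A) = so5Act θ μ ν σ (x : A) (y : A) :=
  map_so5Act B.val.toLinearMap x y

lemma Tsph_genS4_mem [SetLike.GradedMonoid 𝒜]
    {Tsph : ℤ × ℤ → Module.End ℂ (Algebra.adjoin ℂ (b '' V))} (hb : ∀ μ ∈ V, b μ ∈ 𝒜 (dbl μ))
    (hTval : ∀ ν ∈ V, ∀ τ (hτ : τ ∈ V),
      (Tsph ν (genS4 b hτ) : A) = (if τ = -ν then 1 else 0) - b ν * b τ)
    {σ τ : ℤ × ℤ} (hσ : σ ∈ V) (hτ : τ ∈ V) :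
    Tsph σ (genS4 b hτ) ∈ restrictGrading 𝒜 (Algebra.adjoin ℂ (b '' V)) (dbl τ + dbl σ) := by
  show (Tsph σ (genS4 b hτ) : A) ∈ 𝒜 (dbl τ + dbl σ)
  rw [hTval σ hσ τ hτ, add_comm]
  refine sub_mem ?_ (SetLike.mul_mem_graded (hb σ hσ) (hb τ hτ))
  split_ifs with h
  · rw [h, dbl_neg, add_neg_cancel]
    exact SetLike.GradedOne.one_mem
  · exact zero_mem _

lemma Lr_genS4 {L : ℤ × ℤ → ℤ × ℤ → Module.End ℂ A}
    {Lr : ℤ × ℤ → ℤ × ℤ → Module.End ℂ (Algebra.adjoin ℂ (b '' V))}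
    (hLval : ∀ μ ∈ V, ∀ ν ∈ V, ∀ σ ∈ V, L μ ν (b σ) = so5Act θ μ ν σ (b μ) (b ν))
    (hLr : ∀ μ ∈ V, ∀ ν ∈ V, ∀ x : Algebra.adjoin ℂ (b '' V),
      ((Lr μ ν x : Algebra.adjoin ℂ (b '' V)) : A) = L μ ν (x : A))
    {μ ν τ : ℤ × ℤ} (hμ : μ ∈ V) (hν : ν ∈ V) (hτ : τ ∈ V) :
    Lr μ ν (genS4 b hτ) = so5Act θ μ ν τ (genS4 b hμ) (genS4 b hν) :=
  Subtype.ext <| ((hLr μ hμ ν hν _).trans (hLval μ hμ ν hν τ hτ)).trans (coe_so5Act μ ν τ _ _).symm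

lemma bracket_Lr_Tsph_genS4 [SetLike.GradedMonoid 𝒜] {L : ℤ × ℤ → ℤ × ℤ → Module.End ℂ A}
    {Tsph : ℤ × ℤ → Module.End ℂ (Algebra.adjoin ℂ (b '' V))}
    {Lr : ℤ × ℤ → ℤ × ℤ → Module.End ℂ (Algebra.adjoin ℂ (b '' V))}
    (hb : ∀ μ ∈ V, b μ ∈ 𝒜 (dbl μ))
    (hLval : ∀ μ ∈ V, ∀ ν ∈ V, ∀ σ ∈ V, L μ ν (b σ) = so5Act θ μ ν σ (b μ) (b ν))
    (hLeib : ∀ μ ∈ V, ∀ ν ∈ V, IsBraidedDerivation (Q7 θ) 𝒜 (dbl μ + dbl ν) (L μ ν))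
    (hTval : ∀ ν ∈ V, ∀ τ (hτ : τ ∈ V),
      (Tsph ν (genS4 b hτ) : A) = (if τ = -ν then 1 else 0) - b ν * b τ)
    (hLr : ∀ μ ∈ V, ∀ ν ∈ V, ∀ x : Algebra.adjoin ℂ (b '' V),
      ((Lr μ ν x : Algebra.adjoin ℂ (b '' V)) : A) = L μ ν (x : A))
    {μ ν σ τ : ℤ × ℤ} (hμ : μ ∈ V) (hν : ν ∈ V) (hσ : σ ∈ V) (hτ : τ ∈ V) :
    (Lr μ ν ∘ₗ Tsph σ - q θ (μ + ν) σ • (Tsph σ ∘ₗ Lr μ ν)) (genS4 b hτ)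
      = so5Act θ μ ν σ (Tsph μ) (Tsph ν) (genS4 b hτ) := by
  have hL1 : L μ ν 1 = 0 :=
    (hLeib μ hμ ν hν).map_one (isSkewBicharacter_Q7 θ) SetLike.GradedOne.one_mem
  have hLbb : L μ ν (b σ * b τ) = L μ ν (b σ) * b τ + q θ (μ + ν) σ • (b σ * L μ ν (b τ)) := by
    rw [hLeib μ hμ ν hν _ _ _ (hb σ hσ), Q7_dbl_add_dbl]
  have hLT : (Lr μ ν (Tsph σ (genS4 b hτ)) : A)
      = -(L μ ν (b σ) * b τ + q θ (μ + ν) σ • (b σ * L μ ν (b τ))) := by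
    rw [hLr μ hμ ν hν, hTval σ hσ τ hτ, map_sub, apply_ite (L μ ν), hL1, map_zero, ite_self,
      hLbb, zero_sub]
  have hTLr : (Tsph σ (Lr μ ν (genS4 b hτ)) : A)
      = so5Act θ μ ν τ (if μ = -σ then (1 : A) else 0) (if ν = -σ then 1 else 0)
        - b σ * L μ ν (b τ) := by
    rw [Lr_genS4 hLval hLr hμ hν hτ, map_so5Act, coe_so5Act, hTval σ hσ μ hμ,
      hTval σ hσ ν hν, so5Act_sub, hLval μ hμ ν hν τ hτ]
    exact congrArg _ (map_so5Act (LinearMap.mulLeft ℂ (b σ)) (b μ) (b ν)).symm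
  have hTT : (so5Act θ μ ν σ (Tsph μ) (Tsph ν) (genS4 b hτ) : A)
      = so5Act θ μ ν σ (if τ = -μ then (1 : A) else 0) (if τ = -ν then 1 else 0)
        - L μ ν (b σ) * b τ := by
    rw [← LinearMap.applyₗ_apply_apply (R := ℂ), map_so5Act, coe_so5Act]
    simp only [LinearMap.applyₗ_apply_apply]
    rw [hTval μ hμ τ hτ, hTval ν hν τ hτ, so5Act_sub, hLval μ hμ ν hν σ hσ]
    exact congrArg _ (map_so5Act (LinearMap.mulRight ℂ (b τ)) (b μ) (b ν)).symm
  apply Subtype.ext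
  rw [hTT, ← so5Act_ite_smul]
  simp only [LinearMap.sub_apply, LinearMap.smul_apply, LinearMap.comp_apply,
    AddSubgroupClass.coe_sub, SetLike.val_smul, hLT, hTLr]
  module

lemma bracket_Lr_Tsph [SetLike.GradedMonoid 𝒜] {L : ℤ × ℤ → ℤ × ℤ → Module.End ℂ A}
    {Tsph : ℤ × ℤ → Module.End ℂ (Algebra.adjoin ℂ (b '' V))}
    {Lr : ℤ × ℤ → ℤ × ℤ → Module.End ℂ (Algebra.adjoin ℂ (b '' V))}
    (hb : ∀ μ ∈ V, b μ ∈ 𝒜 (dbl μ))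
    (hLval : ∀ μ ∈ V, ∀ ν ∈ V, ∀ σ ∈ V, L μ ν (b σ) = so5Act θ μ ν σ (b μ) (b ν))
    (hLeib : ∀ μ ∈ V, ∀ ν ∈ V, IsBraidedDerivation (Q7 θ) 𝒜 (dbl μ + dbl ν) (L μ ν))
    (hTval : ∀ ν ∈ V, ∀ τ (hτ : τ ∈ V),
      (Tsph ν (genS4 b hτ) : A) = (if τ = -ν then 1 else 0) - b ν * b τ)
    (hTLeib : ∀ ν ∈ V,
      IsBraidedDerivation (Q7 θ) (restrictGrading 𝒜 (Algebra.adjoin ℂ (b '' V))) (dbl ν) (Tsph ν))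
    (hLr : ∀ μ ∈ V, ∀ ν ∈ V, ∀ x : Algebra.adjoin ℂ (b '' V),
      ((Lr μ ν x : Algebra.adjoin ℂ (b '' V)) : A) = L μ ν (x : A))
    {μ ν σ : ℤ × ℤ} (hμ : μ ∈ V) (hν : ν ∈ V) (hσ : σ ∈ V) :
    Lr μ ν ∘ₗ Tsph σ - q θ (μ + ν) σ • (Tsph σ ∘ₗ Lr μ ν) = so5Act θ μ ν σ (Tsph μ) (Tsph ν) := by
  have hL : IsBraidedDerivation (Q7 θ) (restrictGrading 𝒜 (Algebra.adjoin ℂ (b '' V)))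
      (dbl μ + dbl ν) (Lr μ ν) := fun m x y hx => Subtype.ext <| by
    simp only [hLr μ hμ ν hν, MulMemClass.coe_mul, Subalgebra.coe_add, SetLike.val_smul]
    exact hLeib μ hμ ν hν m _ _ hx
  have hV := (hTLeib μ hμ).so5Act (σ := σ) (hTLeib ν hν)
  have h1 : (1 : Algebra.adjoin ℂ (b '' V)) ∈ restrictGrading 𝒜 (Algebra.adjoin ℂ (b '' V)) 0 :=
    SetLike.GradedOne.one_mem (A := 𝒜)
  have hχ := isSkewBicharacter_Q7 θ
  rw [← sub_eq_zero]
  refine Module.End.eq_zero_of_twisted_leibniz Algebra.adjoin_adjoin_coe_preimage ?_ ?_ ?_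
  · rintro a ⟨τ, hτ, ha⟩
    obtain rfl : genS4 b hτ = a := Subtype.ext ha
    have hLτ : Lr μ ν (genS4 b hτ)
        ∈ restrictGrading 𝒜 (Algebra.adjoin ℂ (b '' V)) (dbl τ + (dbl μ + dbl ν)) := by
      rw [Lr_genS4 hLval hLr hμ hν hτ]
      exact so5Act_mem (hb μ hμ) (hb ν hν)
    refine ⟨Q7 θ (dbl μ + dbl ν + dbl σ) (dbl τ), fun y => ?_⟩
    have hbr := hL.bracket_mul hχ (hTLeib σ hσ) (hb τ hτ) hLτ (Tsph_genS4_mem hb hTval hσ hτ) y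
    rw [Q7_dbl_add_dbl] at hbr
    simp only [LinearMap.sub_apply] at hbr ⊢
    rw [hbr, hV _ _ _ (hb τ hτ)]
    simp only [sub_mul, mul_sub, smul_sub]
    abel
  · rw [LinearMap.sub_apply, hV.map_one hχ h1]
    simp [(hTLeib σ hσ).map_one hχ h1, hL.map_one hχ h1]
  · rintro a ⟨τ, hτ, ha⟩
    obtain rfl : genS4 b hτ = a := Subtype.ext ha
    exact sub_eq_zero.mpr (bracket_Lr_Tsph_genS4 hb hLval hLeib hTval hLr hμ hν hσ hτ)

end FourSphere

section SevenSphere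

variable {θ : ℝ} {A : Type*} [Ring A] [Algebra ℂ A] {𝒜 : ℤ × ℤ → Submodule ℂ A}
  {b : ℤ × ℤ → A} {L : ℤ × ℤ → ℤ × ℤ → Module.End ℂ A}

/-- `ρ(T_ν)` -/
def instantonConnection (b : ℤ × ℤ → A) (L : ℤ × ℤ → ℤ × ℤ → Module.End ℂ A) (ν : ℤ × ℤ) :
    Module.End ℂ A :=
  ∑ μ ∈ V, LinearMap.mulLeft ℂ (b (-μ)) ∘ₗ L μ ν

lemma mulLeft_so5Act_comp (x y : A) (F : Module.End ℂ A) {μ ν σ : ℤ × ℤ} :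
    LinearMap.mulLeft ℂ (so5Act θ μ ν σ x y) ∘ₗ F
      = so5Act θ μ ν σ (LinearMap.mulLeft ℂ x ∘ₗ F) (LinearMap.mulLeft ℂ y ∘ₗ F) :=
  map_so5Act ((LinearMap.lcomp ℂ A F).comp (LinearMap.mul ℂ A)) x y

lemma mulLeft_comp_so5Act (x : A) (F G : Module.End ℂ A) {μ ν σ : ℤ × ℤ} :
    LinearMap.mulLeft ℂ x ∘ₗ so5Act θ μ ν σ F G
      = so5Act θ μ ν σ (LinearMap.mulLeft ℂ x ∘ₗ F) (LinearMap.mulLeft ℂ x ∘ₗ G) :=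
  map_so5Act (LinearMap.compRight ℂ (LinearMap.mulLeft ℂ x)) F G

lemma bracket_L_mulLeft_comp (hb : ∀ μ ∈ V, b μ ∈ 𝒜 (dbl μ))
    (hLval : ∀ μ ∈ V, ∀ ν ∈ V, ∀ σ ∈ V, L μ ν (b σ) = so5Act θ μ ν σ (b μ) (b ν))
    (hLeib : ∀ μ ∈ V, ∀ ν ∈ V, IsBraidedDerivation (Q7 θ) 𝒜 (dbl μ + dbl ν) (L μ ν))
    (hLrel : ∀ μ ∈ V, ∀ ν ∈ V, ∀ τ ∈ V, ∀ σ ∈ V,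
      L μ ν ∘ₗ L τ σ - q θ (μ + ν) (τ + σ) • (L τ σ ∘ₗ L μ ν)
        = so5Act θ μ ν τ (L μ σ) (L ν σ) - q θ τ σ • so5Act θ μ ν σ (L μ τ) (L ν τ))
    {μ ν σ τ : ℤ × ℤ} (hμ : μ ∈ V) (hν : ν ∈ V) (hσ : σ ∈ V) (hτ : τ ∈ V) :
    L μ ν ∘ₗ (LinearMap.mulLeft ℂ (b (-τ)) ∘ₗ L τ σ)
        - q θ (μ + ν) σ • ((LinearMap.mulLeft ℂ (b (-τ)) ∘ₗ L τ σ) ∘ₗ L μ ν)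
      = so5Act θ μ ν (-τ) (LinearMap.mulLeft ℂ (b μ) ∘ₗ L τ σ)
          (LinearMap.mulLeft ℂ (b ν) ∘ₗ L τ σ)
        + so5Act θ μ ν τ (q θ (μ + ν) (-τ) • LinearMap.mulLeft ℂ (b (-τ)) ∘ₗ L μ σ)
          (q θ (μ + ν) (-τ) • LinearMap.mulLeft ℂ (b (-τ)) ∘ₗ L ν σ)
        - so5Act θ μ ν σ ((q θ (μ + ν) (-τ) * q θ τ σ) • LinearMap.mulLeft ℂ (b (-τ)) ∘ₗ L μ τ)
          ((q θ (μ + ν) (-τ) * q θ τ σ) • LinearMap.mulLeft ℂ (b (-τ)) ∘ₗ L ν τ) := by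
  have hc : Q7 θ (dbl μ + dbl ν) (dbl (-τ)) * q θ (μ + ν) (τ + σ) = q θ (μ + ν) σ := by
    rw [← dbl_add, ← Q7_dbl_dbl, ← Q7_dbl_dbl, ← (isSkewBicharacter_Q7 θ).map_add_right,
      ← dbl_add, neg_add_cancel_left, Q7_dbl_dbl]
  rw [← hc, (hLeib μ hμ ν hν).comp_mulLeft (hb _ (neg_mem_V hτ)), hLrel μ hμ ν hν τ hτ σ hσ,
    hLval μ hμ ν hν _ (neg_mem_V hτ), mulLeft_so5Act_comp, LinearMap.comp_sub,
    LinearMap.comp_smul, mulLeft_comp_so5Act, mulLeft_comp_so5Act, ← dbl_add, Q7_dbl_dbl,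
    ← smul_so5Act, ← smul_so5Act]
  module

lemma sum_smul_mulLeft_comp_eq_neg
    (hanti : ∀ μ ∈ V, ∀ ν ∈ V, L μ ν = -(q θ μ ν) • L ν μ) {κ : ℤ × ℤ} (hκ : κ ∈ V)
    {c : ℤ × ℤ → ℂ} (hc : ∀ τ, c τ * q θ κ τ = 1) :
    ∑ τ ∈ V, c τ • LinearMap.mulLeft ℂ (b (-τ)) ∘ₗ L κ τ = -instantonConnection b L κ := by
  rw [instantonConnection, ← Finset.sum_neg_distrib]
  refine Finset.sum_congr rfl fun τ hτ => ?_
  rw [hanti κ hκ τ hτ, LinearMap.comp_smul, smul_smul, mul_neg, hc, neg_one_smul]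

lemma bracket_L_instantonConnection (hb : ∀ μ ∈ V, b μ ∈ 𝒜 (dbl μ))
    (hLval : ∀ μ ∈ V, ∀ ν ∈ V, ∀ σ ∈ V, L μ ν (b σ) = so5Act θ μ ν σ (b μ) (b ν))
    (hLeib : ∀ μ ∈ V, ∀ ν ∈ V, IsBraidedDerivation (Q7 θ) 𝒜 (dbl μ + dbl ν) (L μ ν))
    (hanti : ∀ μ ∈ V, ∀ ν ∈ V, L μ ν = -(q θ μ ν) • L ν μ)
    (hLrel : ∀ μ ∈ V, ∀ ν ∈ V, ∀ τ ∈ V, ∀ σ ∈ V,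
      L μ ν ∘ₗ L τ σ - q θ (μ + ν) (τ + σ) • (L τ σ ∘ₗ L μ ν)
        = so5Act θ μ ν τ (L μ σ) (L ν σ) - q θ τ σ • so5Act θ μ ν σ (L μ τ) (L ν τ))
    {μ ν σ : ℤ × ℤ} (hμ : μ ∈ V) (hν : ν ∈ V) (hσ : σ ∈ V) :
    L μ ν ∘ₗ instantonConnection b L σ - q θ (μ + ν) σ • (instantonConnection b L σ ∘ₗ L μ ν)
      = so5Act θ μ ν σ (instantonConnection b L μ) (instantonConnection b L ν) := by
  have hsum : L μ ν ∘ₗ instantonConnection b L σ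
        - q θ (μ + ν) σ • (instantonConnection b L σ ∘ₗ L μ ν)
      = ∑ τ ∈ V, (L μ ν ∘ₗ (LinearMap.mulLeft ℂ (b (-τ)) ∘ₗ L τ σ)
          - q θ (μ + ν) σ • ((LinearMap.mulLeft ℂ (b (-τ)) ∘ₗ L τ σ) ∘ₗ L μ ν)) := by
    simp only [instantonConnection, ← Module.End.mul_eq_comp, Finset.mul_sum, Finset.sum_mul,
      Finset.smul_sum, Finset.sum_sub_distrib]
  have hqν : q θ (μ + ν) ν = q θ μ ν :=
    q_eq_q (by simp only [wedge, Prod.fst_add, Prod.snd_add]; ring)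
  have hqμ : q θ μ ν * q θ (μ + ν) μ = 1 :=
    q_mul_q_eq_one (by simp only [wedge, Prod.fst_add, Prod.snd_add]; ring)
  have hcontract : so5Act θ μ ν σ
      (∑ τ ∈ V, (q θ (μ + ν) (-τ) * q θ τ σ) • LinearMap.mulLeft ℂ (b (-τ)) ∘ₗ L μ τ)
      (∑ τ ∈ V, (q θ (μ + ν) (-τ) * q θ τ σ) • LinearMap.mulLeft ℂ (b (-τ)) ∘ₗ L ν τ)
      = -so5Act θ μ ν σ (instantonConnection b L μ) (instantonConnection b L ν) := by
    rw [neg_so5Act]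
    apply so5Act_congr
    · rintro rfl
      refine sum_smul_mulLeft_comp_eq_neg hanti hμ fun τ => q_mul_q_mul_q_eq_one ?_
      simp only [wedge, Prod.fst_add, Prod.snd_add, Prod.fst_neg, Prod.snd_neg]; ring
    · rintro rfl
      refine sum_smul_mulLeft_comp_eq_neg hanti hν fun τ => q_mul_q_mul_q_eq_one ?_
      simp only [wedge, Prod.fst_add, Prod.snd_add, Prod.fst_neg, Prod.snd_neg]; ring
  rw [hsum,
    Finset.sum_congr rfl fun τ hτ => bracket_L_mulLeft_comp hb hLval hLeib hLrel hμ hν hσ hτ,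
    Finset.sum_sub_distrib, Finset.sum_add_distrib, sum_so5Act_neg_eval hμ hν,
    sum_so5Act_eval hμ hν, sum_so5Act, hcontract, neg_neg, neg_neg, hqν, smul_smul, hqμ, one_smul]
  abel

end SevenSphere

theorem instanton_connection_invariant
    (θ : ℝ)
    (A : Type*) [Ring A] [Algebra ℂ A]
    (𝒜 : ℤ × ℤ → Submodule ℂ A) [GradedAlgebra 𝒜]
    -- generators `b_μ` of the coinvariant subalgebra `O(S^4_θ)` (`b_μ* = b_{−μ}`)
    (b : ℤ × ℤ → A)
    (hb : ∀ μ ∈ V, b μ ∈ 𝒜 (dbl μ))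
    (hcomm : ∀ μ ∈ V, ∀ ν ∈ V, b μ * b ν = q θ μ ν • (b ν * b μ))
    (hsph : ∑ μ ∈ V, b (-μ) * b μ = 1)
    -- the `O(SU(2))`-equivariant braided derivations `L_{μ,ν}` of `O(S^7_θ)`
    (L : ℤ × ℤ → ℤ × ℤ → Module.End ℂ A)
    (hanti : ∀ μ ∈ V, ∀ ν ∈ V, L μ ν = -(q θ μ ν) • L ν μ)
    (hLval : ∀ μ ∈ V, ∀ ν ∈ V, ∀ σ ∈ V,
      L μ ν (b σ) = (if σ = -ν then (1:ℂ) else 0) • b μ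
        - q θ μ ν • ((if σ = -μ then (1:ℂ) else 0) • b ν))
    (hLeib : ∀ μ ∈ V, ∀ ν ∈ V, ∀ (m : ℤ × ℤ) (x y : A), x ∈ 𝒜 m →
      L μ ν (x * y) = L μ ν x * y + Q7 θ (dbl μ + dbl ν) m • (x * L μ ν y))
    -- the derivations `L_{μ,ν}` preserve the coinvariant subalgebra
    -- `B = O(S^4_θ)`
    (hLB : ∀ μ ∈ V, ∀ ν ∈ V, ∀ x ∈ Algebra.adjoin ℂ (b '' V),
      L μ ν x ∈ Algebra.adjoin ℂ (b '' V))
    -- the generators `T_ν` of the braided derivations of `O(S^4_θ)`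
    (Tsph : ℤ × ℤ → Module.End ℂ (Algebra.adjoin ℂ (b '' V)))
    (hTval : ∀ ν ∈ V, ∀ τ, ∀ hτ : τ ∈ V,
      ((Tsph ν ⟨b τ, Algebra.subset_adjoin (Set.mem_image_of_mem b hτ)⟩ :
          Algebra.adjoin ℂ (b '' V)) : A)
        = (if τ = -ν then 1 else 0) - b ν * b τ)
    (hTLeib : ∀ ν ∈ V, ∀ (m : ℤ × ℤ) (x y : Algebra.adjoin ℂ (b '' V)),
      (x : A) ∈ 𝒜 m →
      Tsph ν (x * y) = Tsph ν x * y + Q7 θ (dbl ν) m • (x * Tsph ν y))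
    -- the `so_θ(5)` relations for the `L_{μ,ν}`
    (hanti : ∀ μ ∈ V, ∀ ν ∈ V, L μ ν = -(q θ μ ν) • L ν μ)
    (hLrel : ∀ μ ∈ V, ∀ ν ∈ V, ∀ τ ∈ V, ∀ σ ∈ V,
      L μ ν ∘ₗ L τ σ - q θ (μ + ν) (τ + σ) • (L τ σ ∘ₗ L μ ν)
        = (if τ = -ν then (1:ℂ) else 0) • L μ σ
          - q θ μ ν • ((if τ = -μ then (1:ℂ) else 0) • L ν σ)
          - q θ τ σ • ((if σ = -ν then (1:ℂ) else 0) • L μ τ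
              - q θ μ ν • ((if σ = -μ then (1:ℂ) else 0) • L ν τ)))
    -- the restrictions `L^π_{μ,ν}` of the `L_{μ,ν}` to `O(S^4_θ)`
    (Lr : ℤ × ℤ → ℤ × ℤ → Module.End ℂ (Algebra.adjoin ℂ (b '' V)))
    (hLr : ∀ μ ∈ V, ∀ ν ∈ V, ∀ x : Algebra.adjoin ℂ (b '' V),
      ((Lr μ ν x : Algebra.adjoin ℂ (b '' V)) : A) = L μ ν (x : A))
    -- the connection `ρ`, an `O(S^4_θ)`-linear map from `Der(O(S^4_θ))` to
    -- the equivariant derivations of `O(S^7_θ)`, with `ρ(T_ν) = Σ_μ b_μ* L_{μ,ν}`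
    (ρ : Module.End ℂ (Algebra.adjoin ℂ (b '' V)) → Module.End ℂ A)
    (hρadd : ∀ X Y, ρ (X + Y) = ρ X + ρ Y)
    (hρsmul : ∀ (c : ℂ) X, ρ (c • X) = c • ρ X)
    (hρlin : ∀ (c : Algebra.adjoin ℂ (b '' V)) X,
      ρ ((LinearMap.mulLeft ℂ c) ∘ₗ X) = (LinearMap.mulLeft ℂ (c : A)) ∘ₗ ρ X)
    (hρT : ∀ ν ∈ V, ρ (Tsph ν) = ∑ μ ∈ V, (LinearMap.mulLeft ℂ (b (-μ))) ∘ₗ L μ ν) :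
    -- `[L_{μ,ν}, ρ(T_σ)] − ρ([L^π_{μ,ν}, T_σ]) = 0` for all generators `T_σ`
    ∀ μ ∈ V, ∀ ν ∈ V, ∀ σ ∈ V,
      (L μ ν ∘ₗ ρ (Tsph σ) - q θ (μ + ν) σ • (ρ (Tsph σ) ∘ₗ L μ ν))
        - ρ (Lr μ ν ∘ₗ Tsph σ - q θ (μ + ν) σ • (Tsph σ ∘ₗ Lr μ ν)) = 0 := by
  intro μ hμ ν hν σ hσ
  let ρₗ : Module.End ℂ (Algebra.adjoin ℂ (b '' V)) →ₗ[ℂ] Module.End ℂ A :=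
    { toFun := ρ, map_add' := hρadd, map_smul' := hρsmul }
  rw [bracket_Lr_Tsph hb hLval hLeib hTval hTLeib hLr hμ hν hσ,
    show ρ (so5Act θ μ ν σ (Tsph μ) (Tsph ν)) = so5Act θ μ ν σ (ρ (Tsph μ)) (ρ (Tsph ν)) from
      map_so5Act ρₗ _ _,
    hρT μ hμ, hρT ν hν, hρT σ hσ]
  exact sub_eq_zero.mpr (bracket_L_instantonConnection hb hLval hLeib hanti hLrel hμ hν hσ)

end Statement8
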